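/- arXiv:1701.01173 — 3 statements merged into one kernel-verified Lean document; each statement's English description precedes it below -/
import Mathlib

section
/- There exists an admissible sequence d : ℕ → Fin 3 which is not eventually periodic such that for every n ≥ 1, |F(n)| = n + 1 and |P(n)| = 2^n + 1. (Hence the follower set sequence of the β-shift X_d grows linearly while its predecessor set sequence grows exponentially.) -/
namespace BetaShift

variable {A : Type*}

/-- The shift map: `(shift x) n = x (n+1)`. -/
def shift (x : ℕ → A) : ℕ → A := fun n => x (n + 1)

/-- Lexicographic order on one-sided sequences: `x = y`, or there is an index `i`
such that `x j = y j` for all `j < i` and `x i < y i`. -/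
def SeqLe [LinearOrder A] (x y : ℕ → A) : Prop :=
  x = y ∨ ∃ i, (∀ j, j < i → x j = y j) ∧ x i < y i

/-- A word `w` occurs in the sequence `x`. -/
def Occurs (w : List A) (x : ℕ → A) : Prop :=
  ∃ i : ℕ, ∀ j : Fin w.length, x (i + j) = w.get j

/-- `Complexity x n` is the number `Φ_n(x)` of distinct words of length `n` occurring in `x`. -/
noncomputable def Complexity (x : ℕ → A) (n : ℕ) : ℕ :=
  Set.ncard {w : List A | w.length = n ∧ Occurs w x}

/-- A sequence is eventually periodic if there are `p ≥ 1` and `N` with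
`d (i + p) = d i` for all `i ≥ N`. -/
def EventuallyPeriodic (d : ℕ → A) : Prop :=
  ∃ p, 1 ≤ p ∧ ∃ N, ∀ i, N ≤ i → d (i + p) = d i

/-- `(d)_k`, the `k`-letter prefix of the sequence `d`, as a word. -/
def prefixWord (d : ℕ → A) (k : ℕ) : List A := List.ofFn (fun i : Fin k => d i)

variable {m : ℕ}

/-- `d` is admissible: every shift of `d` is lexicographically ≤ `d`,
and `d` is not eventually `0`. -/
def Admissible (d : ℕ → Fin m) : Prop :=
  (∀ i, SeqLe (shift^[i] d) d) ∧ ∀ N, ∃ i, N ≤ i ∧ (d i).val ≠ 0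

/-- The one-sided β-shift `X_d` determined by the admissible sequence `d`. -/
def XSet (d : ℕ → Fin m) : Set (ℕ → Fin m) :=
  {x | ∀ i, SeqLe (shift^[i] x) d}

/-- The language of `X_d`: all words occurring in some point of `X_d`. -/
def Lang (d : ℕ → Fin m) : Set (List (Fin m)) :=
  {w | ∃ x ∈ XSet d, Occurs w x}

/-- The follower set of the word `w` in `X_d`. -/
def Fol (d : ℕ → Fin m) (w : List (Fin m)) : Set (List (Fin m)) :=
  {u | w ++ u ∈ Lang d}

/-- The predecessor set of the word `w` in `X_d`. -/
def Pred (d : ℕ → Fin m) (w : List (Fin m)) : Set (List (Fin m)) :=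
  {s | s ++ w ∈ Lang d}

/-- The extender set of the word `w` in `X_d`. -/
def Ext (d : ℕ → Fin m) (w : List (Fin m)) : Set (List (Fin m) × List (Fin m)) :=
  {p | p.1 ++ w ++ p.2 ∈ Lang d}

/-- `|F(n)|`: the number of distinct follower sets of words of length `n` in `X_d`. -/
noncomputable def FolCount (d : ℕ → Fin m) (n : ℕ) : ℕ :=
  Set.ncard {S | ∃ w ∈ Lang d, w.length = n ∧ S = Fol d w}

/-- `|P(n)|`: the number of distinct predecessor sets of words of length `n` in `X_d`. -/
noncomputable def PredCount (d : ℕ → Fin m) (n : ℕ) : ℕ :=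
  Set.ncard {S | ∃ w ∈ Lang d, w.length = n ∧ S = Pred d w}

/-- `|E(n)|`: the number of distinct extender sets of words of length `n` in `X_d`. -/
noncomputable def ExtCount (d : ℕ → Fin m) (n : ℕ) : ℕ :=
  Set.ncard {S | ∃ w ∈ Lang d, w.length = n ∧ S = Ext d w}

/-- The largest `k ≤ n` such that the `k`-letter prefix of `d` is a suffix of `v`
(`k = 0`, the empty prefix, always works). -/
def classIndex (d : ℕ → Fin m) (n : ℕ) (v : List (Fin m)) : ℕ :=
  Nat.findGreatest (fun k => prefixWord d k <:+ v) n

/-- Lexicographic comparison of (equal-length) words: `u = v`, or at the first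
index where they differ, `u` takes the smaller value. -/
def WordLe [LinearOrder A] (u v : List A) : Prop :=
  u = v ∨ ∃ i, ∃ (hu : i < u.length) (hv : i < v.length),
    (∀ j (hju : j < u.length) (hjv : j < v.length), j < i → u.get ⟨j, hju⟩ = v.get ⟨j, hjv⟩) ∧
    u.get ⟨i, hu⟩ < v.get ⟨i, hv⟩

end BetaShift

open BetaShift

/-!
Take `d = 2 u` with `u` a binary sequence in which every binary word occurs. A word lies in the
language of `X_d` iff each of its suffixes is lexicographically at most the prefix of `d` of the
same length.

Follower sets (for any admissible, non-eventually-periodic `d`): `F(w) = F((d)_k)` where `k` is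
the length of the longest suffix of `w` that is a prefix of `d`, and the sets `F((d)_k)` are
pairwise distinct because the shifts `σ^k d` are. The words `0^(n-k) (d)_k` realise every
`k ≤ n`, so `|F(n)| = n + 1`.

Predecessor sets: `P(w)` depends only on the set of `p > 0` with `w ≤ (σ^p d)_{|w|}`, and as
`σ^p d` is binary, this set is either empty (as for `2 0^(n-1)`) or that of a binary word. Distinct
binary words `r` have distinct predecessor sets, since `r` occurs in `d` after some prefix
`(d)_p`, which lies in `P(r')` only if `r' ≤ r`. Hence `|P(n)| = 2^n + 1`.
-/

namespace BetaShift

section Lex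

variable {α : Type*} [LinearOrder α]

theorem cons_le_cons_iff' {a b : α} {l l' : List α} :
    a :: l ≤ b :: l' ↔ a < b ∨ a = b ∧ l ≤ l' := by
  simp only [le_iff_lt_or_eq, List.cons_lt_cons_iff, List.cons.injEq]
  tauto

theorem append_le_append_iff_of_length_eq {u u' v v' : List α} (h : u.length = u'.length) :
    u ++ v ≤ u' ++ v' ↔ u < u' ∨ u = u' ∧ v ≤ v' := by
  induction u generalizing u' with
  | nil =>
    obtain rfl : u' = [] := List.eq_nil_of_length_eq_zero h.symm
    simp
  | cons a u ih =>
    obtain ⟨b, u', rfl⟩ := List.exists_cons_of_length_eq_add_one h.symm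
    simp only [List.cons_append, cons_le_cons_iff', List.cons_lt_cons_iff, List.cons.injEq,
      ih (Nat.succ_injective h)]
    tauto

end Lex

section PrefixWord

variable {A : Type*}

@[simp]
theorem shift_iterate_apply (x : ℕ → A) (k n : ℕ) : (shift^[k] x) n = x (n + k) := by
  induction k generalizing x with
  | zero => rfl
  | succ k ih => rw [Function.iterate_succ_apply, ih]; rfl

@[simp]
theorem length_prefixWord (x : ℕ → A) (k : ℕ) : (prefixWord x k).length = k :=
  List.length_ofFn

@[simp]
theorem getElem_prefixWord (x : ℕ → A) (k i : ℕ) (hi : i < (prefixWord x k).length) :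
    (prefixWord x k)[i] = x i :=
  List.getElem_ofFn ..

@[simp]
theorem prefixWord_zero (x : ℕ → A) : prefixWord x 0 = [] := rfl

theorem prefixWord_succ (x : ℕ → A) (k : ℕ) :
    prefixWord x (k + 1) = x 0 :: prefixWord (shift x) k :=
  List.ofFn_succ

theorem prefixWord_add (x : ℕ → A) (k l : ℕ) :
    prefixWord x (k + l) = prefixWord x k ++ prefixWord (shift^[k] x) l := by
  refine List.ext_getElem (by simp) fun i h _ => ?_
  simp only [getElem_prefixWord, List.getElem_append, length_prefixWord, shift_iterate_apply]
  split_ifs <;> simp_all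

theorem drop_prefixWord (x : ℕ → A) (k n : ℕ) :
    (prefixWord x n).drop k = prefixWord (shift^[k] x) (n - k) := by
  refine List.ext_getElem (by simp) fun i _ _ => ?_
  simp [Nat.add_comm]

theorem prefixWord_eq_prefixWord_iff {x y : ℕ → A} {n : ℕ} :
    prefixWord x n = prefixWord y n ↔ ∀ j < n, x j = y j := by
  simp [prefixWord, List.ofFn_inj, funext_iff, Fin.forall_iff]

variable [LinearOrder A]

theorem prefixWord_le_of_le_add {x y : ℕ → A} {n k : ℕ}
    (h : prefixWord x (n + k) ≤ prefixWord y (n + k)) : prefixWord x n ≤ prefixWord y n := by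
  rw [prefixWord_add, prefixWord_add, append_le_append_iff_of_length_eq (by simp)] at h
  exact h.elim le_of_lt fun h => h.1.le

theorem seqLe_iff_forall_prefixWord_le {x y : ℕ → A} :
    SeqLe x y ↔ ∀ n, prefixWord x n ≤ prefixWord y n := by
  constructor
  · rintro (rfl | ⟨i, hagree, hlt⟩) n
    · exact le_rfl
    apply prefixWord_le_of_le_add (k := i + 1)
    rw [Nat.add_comm, prefixWord_add x (i + 1), prefixWord_add y (i + 1),
      append_le_append_iff_of_length_eq (by simp)]
    refine Or.inl ?_
    rw [prefixWord_add, prefixWord_add, prefixWord_eq_prefixWord_iff.mpr hagree]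
    simpa [prefixWord_succ] using List.append_left_lt (List.cons_lt_cons_iff.mpr (Or.inl hlt))
  · intro h
    by_cases hxy : x = y
    · exact Or.inl hxy
    have hdiff : ∃ i, x i ≠ y i := by simpa [funext_iff] using hxy
    refine Or.inr ⟨Nat.find hdiff, fun j hj => not_not.mp (Nat.find_min hdiff hj), ?_⟩
    have hle := h (Nat.find hdiff + 1)
    rw [prefixWord_add, prefixWord_add, append_le_append_iff_of_length_eq (by simp),
      prefixWord_eq_prefixWord_iff.mpr fun j hj => not_not.mp (Nat.find_min hdiff hj)] at hle
    simp only [lt_self_iff_false, true_and, false_or, prefixWord_succ, prefixWord_zero,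
      cons_le_cons_iff', shift_iterate_apply, zero_add] at hle
    exact hle.resolve_right fun h => Nat.find_spec hdiff h.1

theorem head_le_of_seqLe {x y : ℕ → A} : SeqLe x y → x 0 ≤ y 0
  | .inl rfl => le_rfl
  | .inr ⟨0, _, hlt⟩ => hlt.le
  | .inr ⟨_ + 1, hagree, _⟩ => (hagree 0 (Nat.succ_pos _)).le

theorem SeqLe.shift_iterate {x y : ℕ → A} (h : SeqLe x y) {p : ℕ}
    (hp : prefixWord x p = prefixWord y p) : SeqLe (shift^[p] x) (shift^[p] y) := by
  rw [seqLe_iff_forall_prefixWord_le] at h ⊢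
  intro n
  have hle := h (p + n)
  rw [prefixWord_add, prefixWord_add, append_le_append_iff_of_length_eq (by simp), hp] at hle
  exact (hle.resolve_left (lt_irrefl _)).2

end PrefixWord

variable {m : ℕ} {d : ℕ → Fin m}

theorem replicate_zero_le_prefixWord [NeZero m] (x : ℕ → Fin m) (k : ℕ) :
    List.replicate k 0 ≤ prefixWord x k := by
  induction k generalizing x with
  | zero => exact le_rfl
  | succ k ih =>
    rw [List.replicate_succ, prefixWord_succ, cons_le_cons_iff']
    exact (Fin.zero_le (x 0)).lt_or_eq.imp_right fun h => ⟨h, ih _⟩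

theorem prefixWord_getD_add [NeZero m] (v : List (Fin m)) (k : ℕ) :
    prefixWord (fun j => v.getD j 0) (v.length + k) = v ++ List.replicate k 0 := by
  refine List.ext_getElem (by simp) fun i h _ => ?_
  simp only [getElem_prefixWord, List.getElem_append, List.getElem_replicate]
  split_ifs with hi
  · exact List.getD_eq_getElem _ _ hi
  · exact List.getD_eq_default _ _ (not_lt.mp hi)

theorem mem_lang_iff [NeZero m] {w : List (Fin m)} :
    w ∈ Lang d ↔ ∀ i, w.drop i ≤ prefixWord d (w.length - i) := by
  constructor
  · rintro ⟨x, hx, i₀, hocc⟩ i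
    have hdrop : w.drop i = prefixWord (shift^[i₀ + i] x) (w.length - i) := by
      refine List.ext_getElem (by simp) fun j h _ => ?_
      have := hocc ⟨i + j, by simp at h; omega⟩
      simp only [List.get_eq_getElem] at this
      simp [← this, Nat.add_comm, Nat.add_left_comm]
    exact hdrop ▸ seqLe_iff_forall_prefixWord_le.mp (hx (i₀ + i)) _
  · intro h
    refine ⟨fun j => w.getD j 0, fun i => ?_, 0, fun j => by simp⟩
    have hshift : shift^[i] (fun j => w.getD j 0) = fun j => (w.drop i).getD j 0 := by
      funext j
      simp [List.getD_eq_getElem?_getD, Nat.add_comm]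
    rw [hshift, seqLe_iff_forall_prefixWord_le]
    intro n
    apply prefixWord_le_of_le_add (k := (w.drop i).length)
    rw [Nat.add_comm, prefixWord_getD_add, prefixWord_add,
      append_le_append_iff_of_length_eq (by simp), List.length_drop]
    exact (h i).lt_or_eq.imp_right fun heq =>
      ⟨by simpa using heq, replicate_zero_le_prefixWord _ _⟩

theorem drop_append_le_prefixWord_iff {u v : List (Fin m)} {i : ℕ} (hi : i ≤ u.length) :
    (u ++ v).drop i ≤ prefixWord d ((u ++ v).length - i) ↔
      u.drop i < prefixWord d (u.length - i) ∨
        u.drop i = prefixWord d (u.length - i) ∧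
          v ≤ prefixWord (shift^[u.length - i] d) v.length := by
  rw [List.drop_append_of_le_length hi, List.length_append,
    show u.length + v.length - i = u.length - i + v.length by omega, prefixWord_add,
    append_le_append_iff_of_length_eq (by simp)]

theorem append_mem_lang_iff [NeZero m] {u v : List (Fin m)} :
    u ++ v ∈ Lang d ↔ u ∈ Lang d ∧ v ∈ Lang d ∧
      ∀ k, prefixWord d k <:+ u → v ≤ prefixWord (shift^[k] d) v.length := by
  simp only [mem_lang_iff]
  constructor
  · intro h
    refine ⟨fun i => ?_, fun i => ?_, fun k hk => ?_⟩
    · rcases le_or_gt i u.length with hi | hi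
      · exact ((drop_append_le_prefixWord_iff hi).mp (h i)).elim le_of_lt fun h => h.1.le
      · simp [List.drop_of_length_le hi.le, Nat.sub_eq_zero_of_le hi.le]
    · simpa [List.drop_length_add_append, Nat.add_sub_add_left] using h (u.length + i)
    · have hk' := hk.length_le
      rw [length_prefixWord] at hk'
      have hdrop : u.drop (u.length - k) = prefixWord d k := by
        rw [List.suffix_iff_eq_drop] at hk
        simpa using hk.symm
      have := (drop_append_le_prefixWord_iff (Nat.sub_le u.length k)).mp (h (u.length - k))
      rw [hdrop, Nat.sub_sub_self hk'] at this
      exact (this.resolve_left (lt_irrefl _)).2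
  · rintro ⟨hu, hv, hk⟩ i
    rcases le_or_gt i u.length with hi | hi
    · refine (drop_append_le_prefixWord_iff hi).mpr ((hu i).lt_or_eq.imp_right fun heq => ?_)
      exact ⟨heq, hk _ (heq ▸ List.drop_suffix i u)⟩
    · obtain ⟨j, rfl⟩ := Nat.exists_eq_add_of_lt hi
      simpa [Nat.add_assoc, List.drop_length_add_append, Nat.add_sub_add_left] using hv (j + 1)

theorem replicate_zero_mem_lang [NeZero m] (k : ℕ) : List.replicate k 0 ∈ Lang d :=
  mem_lang_iff.mpr fun i => by simpa using replicate_zero_le_prefixWord d (k - i)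

theorem mem_lang_of_forall_lt [NeZero m] {w : List (Fin m)} (h : ∀ x ∈ w, x < d 0) :
    w ∈ Lang d := by
  refine mem_lang_iff.mpr fun i => ?_
  cases hdrop : w.drop i with
  | nil =>
    rw [Nat.sub_eq_zero_of_le (List.drop_eq_nil_iff.mp hdrop)]
    exact le_rfl
  | cons x t =>
    have hlen : w.length - i = t.length + 1 := by simpa using congrArg List.length hdrop
    rw [hlen, prefixWord_succ, cons_le_cons_iff']
    exact Or.inl (h x (List.mem_of_mem_drop (hdrop ▸ List.mem_cons_self)))

theorem prefixWord_shift_iterate_mem_lang (hd : Admissible d) (p n : ℕ) :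
    prefixWord (shift^[p] d) n ∈ Lang d :=
  ⟨d, hd.1, p, fun j => by simp [List.get_eq_getElem, Nat.add_comm]⟩

theorem Admissible.zero_lt [NeZero m] (hd : Admissible d) : 0 < d 0 := by
  by_contra! h
  obtain ⟨i, -, hi⟩ := hd.2 0
  have := head_le_of_seqLe (hd.1 i)
  simp only [shift_iterate_apply, zero_add] at this
  exact hi (by simpa using le_antisymm (this.trans h) (Fin.zero_le _))

theorem Admissible.seqLe_shift_iterate_of_suffix (hd : Admissible d) {p q : ℕ} (hpq : p ≤ q)
    (h : prefixWord d p <:+ prefixWord d q) : SeqLe (shift^[q] d) (shift^[p] d) := by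
  have hagree : prefixWord (shift^[q - p] d) p = prefixWord d p := by
    rw [List.suffix_iff_eq_drop, drop_prefixWord] at h
    simpa [Nat.sub_sub_self hpq] using h.symm
  simpa [← Function.iterate_add_apply, Nat.add_sub_of_le hpq] using
    SeqLe.shift_iterate (hd.1 (q - p)) hagree

/-- The follower set `F((d)_k)`, which every `F(w)` turns out to be. -/
def folClass (d : ℕ → Fin m) (k : ℕ) : Set (List (Fin m)) :=
  {u | u ∈ Lang d ∧ u ≤ prefixWord (shift^[k] d) u.length}

theorem fol_eq_folClass [NeZero m] (hd : Admissible d) {w : List (Fin m)} (hw : w ∈ Lang d) :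
    Fol d w = folClass d (classIndex d w.length w) := by
  set K := classIndex d w.length w
  have hK : prefixWord d K <:+ w :=
    Nat.findGreatest_spec (P := fun k => prefixWord d k <:+ w) (m := 0) (Nat.zero_le _)
      List.nil_suffix
  have hmax : ∀ k, prefixWord d k <:+ w → k ≤ K := fun k hk =>
    Nat.le_findGreatest (by simpa using hk.length_le) hk
  ext u
  simp only [Fol, folClass, Set.mem_ofPred_eq, append_mem_lang_iff]
  constructor
  · rintro ⟨-, hu, hle⟩
    exact ⟨hu, hle K hK⟩
  · rintro ⟨hu, hle⟩
    refine ⟨hw, hu, fun k hk => hle.trans ?_⟩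
    have hkK := hmax k hk
    exact seqLe_iff_forall_prefixWord_le.mp (hd.seqLe_shift_iterate_of_suffix hkK
      (List.suffix_of_suffix_length_le hk hK (by simpa using hkK))) _

theorem shift_iterate_injective (hp : ¬ EventuallyPeriodic d) :
    Function.Injective (fun k => shift^[k] d) := by
  intro k k' h
  by_contra hne
  wlog hlt : k < k' generalizing k k'
  · exact this h.symm (Ne.symm hne) (lt_of_le_of_ne (not_lt.mp hlt) (Ne.symm hne))
  refine hp ⟨k' - k, by omega, k, fun i hi => ?_⟩
  have := congrFun h (i - k)
  simp only [shift_iterate_apply, Nat.sub_add_cancel hi] at this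
  rw [this]
  congr 1
  omega

theorem folClass_injective (hd : Admissible d) (hp : ¬ EventuallyPeriodic d) :
    Function.Injective (folClass d) := by
  intro k k' h
  apply shift_iterate_injective hp
  by_contra hne
  obtain ⟨n, hn⟩ : ∃ n, prefixWord (shift^[k] d) n ≠ prefixWord (shift^[k'] d) n := by
    contrapose! hne
    funext j
    exact prefixWord_eq_prefixWord_iff.mp (hne (j + 1)) j (Nat.lt_succ_self j)
  have mem : ∀ j, prefixWord (shift^[j] d) n ∈ folClass d j := fun j =>
    ⟨prefixWord_shift_iterate_mem_lang hd j n, by rw [length_prefixWord]⟩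
  have h₁ : prefixWord (shift^[k] d) n ∈ folClass d k' := h ▸ mem k
  have h₂ : prefixWord (shift^[k'] d) n ∈ folClass d k := h ▸ mem k'
  exact hn (le_antisymm (by simpa using h₁.2) (by simpa using h₂.2))

theorem not_prefixWord_suffix_replicate_append [NeZero m] (hd : Admissible d) {a j : ℕ}
    {u : List (Fin m)} (hj : u.length < j) : ¬ prefixWord d j <:+ List.replicate a 0 ++ u := by
  intro h
  have hlen := h.length_le
  simp only [length_prefixWord, List.length_append, List.length_replicate] at hlen
  have := h.getElem (i := 0) (by simp; omega)
  simp only [getElem_prefixWord, List.length_append, List.length_replicate,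
    length_prefixWord] at this
  rw [List.getElem_append_left (by simp; omega), List.getElem_replicate] at this
  exact hd.zero_lt.ne' this

theorem replicate_append_prefixWord_mem_lang [NeZero m] (hd : Admissible d) (a k : ℕ) :
    List.replicate a 0 ++ prefixWord d k ∈ Lang d := by
  refine append_mem_lang_iff.mpr
    ⟨replicate_zero_mem_lang a, prefixWord_shift_iterate_mem_lang hd 0 k, fun j hj => ?_⟩
  obtain rfl : j = 0 := by
    by_contra hj0
    exact not_prefixWord_suffix_replicate_append hd (u := []) (Nat.pos_of_ne_zero hj0)
      (by simpa using hj)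
  simp

theorem classIndex_replicate_append_prefixWord [NeZero m] (hd : Admissible d) (a k : ℕ) :
    classIndex d (a + k) (List.replicate a 0 ++ prefixWord d k) = k := by
  rw [classIndex, Nat.findGreatest_eq_iff]
  refine ⟨Nat.le_add_left k a, fun _ => List.suffix_append _ _, fun j hkj _ hj => ?_⟩
  exact not_prefixWord_suffix_replicate_append hd (by simpa using hkj) hj

theorem folCount_eq [NeZero m] (hd : Admissible d) (hp : ¬ EventuallyPeriodic d) (n : ℕ) :
    FolCount d n = n + 1 := by
  have hset : {S | ∃ w ∈ Lang d, w.length = n ∧ S = Fol d w} = folClass d '' Set.Iic n := by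
    ext S
    constructor
    · rintro ⟨w, hw, rfl, rfl⟩
      exact ⟨_, Nat.findGreatest_le _, (fol_eq_folClass hd hw).symm⟩
    · rintro ⟨k, hk, rfl⟩
      have hk : n - k + k = n := Nat.sub_add_cancel hk
      refine ⟨_, replicate_append_prefixWord_mem_lang hd (n - k) k, by simpa using hk, ?_⟩
      rw [fol_eq_folClass hd (replicate_append_prefixWord_mem_lang hd _ _)]
      simp only [List.length_append, List.length_replicate, length_prefixWord]
      rw [classIndex_replicate_append_prefixWord hd]
  rw [FolCount, hset, (folClass_injective hd hp).injOn.ncard_image, ← Finset.coe_Iic,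
    Set.ncard_coe_finset, Nat.card_Iic]

theorem pred_eq_of_forall_le_iff [NeZero m] {w w' : List (Fin m)} (hw : w ∈ Lang d)
    (hw' : w' ∈ Lang d)
    (h : ∀ p, 0 < p → (w ≤ prefixWord (shift^[p] d) w.length ↔
      w' ≤ prefixWord (shift^[p] d) w'.length)) :
    Pred d w = Pred d w' := by
  have h' : ∀ p, (w ≤ prefixWord (shift^[p] d) w.length ↔
      w' ≤ prefixWord (shift^[p] d) w'.length) := by
    rintro (_ | p)
    · exact iff_of_true (by simpa using mem_lang_iff.mp hw 0)
        (by simpa using mem_lang_iff.mp hw' 0)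
    · exact h _ p.succ_pos
  ext s
  simp only [Pred, Set.mem_ofPred_eq, append_mem_lang_iff, hw, hw', h']

theorem le_prefixWord_of_pred_eq [NeZero m] (hd : Admissible d) {w : List (Fin m)} {p n : ℕ}
    (h : Pred d (prefixWord (shift^[p] d) n) = Pred d w) :
    w ≤ prefixWord (shift^[p] d) w.length := by
  have hmem : prefixWord d p ∈ Pred d (prefixWord (shift^[p] d) n) := by
    simpa [Pred, ← prefixWord_add] using prefixWord_shift_iterate_mem_lang hd 0 (p + n)
  rw [h] at hmem
  exact (append_mem_lang_iff.mp hmem).2.2 p List.suffix_rfl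

def binDigit (b : Bool) : Fin 3 := if b then 1 else 0

theorem binDigit_injective : Function.Injective binDigit := by decide

theorem binDigit_le_one (b : Bool) : binDigit b ≤ 1 := by
  cases b <;> decide

theorem not_two_cons_le_prefixWord {e : ℕ → Fin 3} (he : e 0 ≤ 1) (t : List (Fin 3))
    (k : ℕ) :
    ¬ 2 :: t ≤ prefixWord e (k + 1) := by
  have h2 : ∀ c : Fin 3, c ≤ 1 → ¬ 2 < c ∧ 2 ≠ c := by decide
  rw [prefixWord_succ, cons_le_cons_iff']
  rintro (h | ⟨h, -⟩)
  exacts [(h2 _ he).1 h, (h2 _ he).2 h]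

theorem never_le_or_exists_binary_le_prefixWord_iff (w : List (Fin 3)) :
    (∀ e : ℕ → Fin 3, (∀ i, e i ≤ 1) → ¬ w ≤ prefixWord e w.length) ∨
      ∃ l : List Bool, l.length = w.length ∧ ∀ e : ℕ → Fin 3, (∀ i, e i ≤ 1) →
        (w ≤ prefixWord e w.length ↔ l.map binDigit ≤ prefixWord e w.length) := by
  induction w with
  | nil => exact Or.inr ⟨[], rfl, fun _ _ => Iff.rfl⟩
  | cons x w ih =>
    have hstep : ∀ (e : ℕ → Fin 3) (y : Fin 3) (v : List (Fin 3)),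
        y :: v ≤ prefixWord e (w.length + 1) ↔
          y < e 0 ∨ y = e 0 ∧ v ≤ prefixWord (shift e) w.length :=
      fun e y v => by rw [prefixWord_succ, cons_le_cons_iff']
    have hshift : ∀ e : ℕ → Fin 3, (∀ i, e i ≤ 1) → ∀ i, shift e i ≤ 1 :=
      fun e he i => he (i + 1)
    simp only [List.length_cons]
    fin_cases x
    · rcases ih with hnever | ⟨l, hl, hiff⟩
      · refine Or.inr ⟨true :: List.replicate w.length false, by simp, fun e he => ?_⟩
        have h01 : ∀ c : Fin 3, c ≤ 1 → (0 < c ↔ 1 < c ∨ 1 = c) := by decide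
        rw [List.map_cons, hstep, hstep]
        simpa [hnever _ (hshift e he), binDigit, replicate_zero_le_prefixWord] using h01 _ (he 0)
      · refine Or.inr ⟨false :: l, by simp [hl], fun e he => ?_⟩
        rw [List.map_cons, hstep, hstep, hiff _ (hshift e he)]
        rfl
    · rcases ih with hnever | ⟨l, hl, hiff⟩
      · refine Or.inl fun e he => ?_
        rw [hstep]
        rintro (h | ⟨-, h⟩)
        exacts [not_lt.mpr (he 0) h, hnever _ (hshift e he) h]
      · refine Or.inr ⟨true :: l, by simp [hl], fun e he => ?_⟩
        rw [List.map_cons, hstep, hstep, hiff _ (hshift e he)]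
        rfl
    · exact Or.inl fun e he => not_two_cons_le_prefixWord (he 0) w w.length

/-- Position `j * j + i` (`i ≤ 2 j`) carries the `i`-th letter of the binary word with code
`(unpair j).1`, so every binary word is written out starting at some square. -/
def universalBits (n : ℕ) : Bool :=
  ((Encodable.decode (α := List Bool) n.sqrt.unpair.1).getD []).getD (n - n.sqrt * n.sqrt) false

theorem exists_universalBits_eq (l : List Bool) :
    ∃ q, ∀ i (hi : i < l.length), universalBits (q + i) = l[i] := by
  set j := Nat.pair (Encodable.encode l) l.length
  have hj : l.length ≤ j := Nat.right_le_pair _ _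
  refine ⟨j * j, fun i hi => ?_⟩
  rw [universalBits, Nat.sqrt_add_eq j (by omega), Nat.unpair_pair, Encodable.encodek,
    Nat.add_sub_cancel_left]
  exact List.getD_eq_getElem _ _ hi

def twoUniversal : ℕ → Fin 3
  | 0 => 2
  | n + 1 => binDigit (universalBits n)

theorem twoUniversal_le_one {p : ℕ} (hp : 0 < p) : twoUniversal p ≤ 1 := by
  obtain ⟨n, rfl⟩ := Nat.exists_eq_add_of_lt hp
  exact binDigit_le_one _

theorem shift_iterate_twoUniversal_le_one {p : ℕ} (hp : 0 < p) (i : ℕ) :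
    (shift^[p] twoUniversal) i ≤ 1 := by
  rw [shift_iterate_apply]
  exact twoUniversal_le_one (by omega)

theorem exists_twoUniversal_eq (l : List Bool) :
    ∃ p, 0 < p ∧ ∀ i (hi : i < l.length), twoUniversal (p + i) = binDigit l[i] := by
  obtain ⟨q, hq⟩ := exists_universalBits_eq l
  refine ⟨q + 1, q.succ_pos, fun i hi => ?_⟩
  rw [Nat.add_right_comm]
  exact congrArg binDigit (hq i hi)

theorem exists_prefixWord_shift_iterate_twoUniversal_eq (l : List Bool) :
    ∃ p, 0 < p ∧ prefixWord (shift^[p] twoUniversal) l.length = l.map binDigit := by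
  obtain ⟨p, hp, heq⟩ := exists_twoUniversal_eq l
  exact ⟨p, hp, List.ext_getElem (by simp) fun i hi _ => by simp [← heq i (by simpa using hi),
    Nat.add_comm]⟩

theorem twoUniversal_not_eventuallyPeriodic : ¬ EventuallyPeriodic twoUniversal := by
  rintro ⟨q, hq, N, hper⟩
  obtain ⟨p, -, hp⟩ := exists_twoUniversal_eq (List.replicate (N + q) false ++ [true])
  have h₀ : twoUniversal (p + N) = 0 := by
    rw [hp N (by simp), List.getElem_append_left (by simp; omega), List.getElem_replicate]
    rfl
  have h₁ : twoUniversal (p + N + q) = 1 := by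
    rw [Nat.add_assoc, hp (N + q) (by simp)]
    simp [binDigit]
  have := hper (p + N) (by omega)
  rw [h₀, h₁] at this
  exact absurd this (by decide)

theorem twoUniversal_admissible : Admissible twoUniversal := by
  refine ⟨fun i => ?_, fun N => ?_⟩
  · rcases i.eq_zero_or_pos with rfl | hi
    · exact Or.inl rfl
    · refine Or.inr ⟨0, fun j hj => absurd hj (Nat.not_lt_zero j), ?_⟩
      exact (shift_iterate_twoUniversal_le_one hi 0).trans_lt (by decide)
  · obtain ⟨p, -, hp⟩ := exists_twoUniversal_eq (List.replicate N false ++ [true])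
    refine ⟨p + N, by omega, ?_⟩
    rw [hp N (by simp)]
    simp [binDigit]

theorem map_binDigit_mem_lang (l : List Bool) : l.map binDigit ∈ Lang twoUniversal :=
  mem_lang_of_forall_lt fun x hx => by
    obtain ⟨b, -, rfl⟩ := List.mem_map.mp hx
    exact (binDigit_le_one b).trans_lt (by decide)

theorem two_cons_replicate_mem_lang (n : ℕ) :
    2 :: List.replicate n 0 ∈ Lang twoUniversal := by
  refine append_mem_lang_iff (u := [2]).mpr ⟨prefixWord_shift_iterate_mem_lang
    twoUniversal_admissible 0 1, replicate_zero_mem_lang n, fun k _ => ?_⟩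
  simpa using replicate_zero_le_prefixWord _ n

def predRepresentatives (n : ℕ) : Set (List (Fin 3)) :=
  insert (2 :: List.replicate n 0) (List.map binDigit '' {l | l.length = n + 1})

theorem exists_pred_eq_pred_representative {n : ℕ} {w : List (Fin 3)}
    (hw : w ∈ Lang twoUniversal) (hlen : w.length = n + 1) :
    ∃ r ∈ predRepresentatives n, Pred twoUniversal w = Pred twoUniversal r := by
  rcases never_le_or_exists_binary_le_prefixWord_iff w with hnever | ⟨l, hl, hiff⟩
  · refine ⟨_, Set.mem_insert _ _, pred_eq_of_forall_le_iff hw (two_cons_replicate_mem_lang n)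
      fun p hp => iff_of_false (hnever _ (shift_iterate_twoUniversal_le_one hp)) ?_⟩
    exact not_two_cons_le_prefixWord (shift_iterate_twoUniversal_le_one hp 0) _ _
  · refine ⟨_, Set.mem_insert_of_mem _ ⟨l, by simp [hl, hlen], rfl⟩,
      pred_eq_of_forall_le_iff hw (map_binDigit_mem_lang l) fun p hp => ?_⟩
    rw [List.length_map, hl]
    exact hiff _ (shift_iterate_twoUniversal_le_one hp)

theorem le_of_pred_map_binDigit_eq {l : List Bool} {w : List (Fin 3)} (hw : w.length = l.length)
    (h : Pred twoUniversal (l.map binDigit) = Pred twoUniversal w) : w ≤ l.map binDigit := by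
  obtain ⟨p, -, hp⟩ := exists_prefixWord_shift_iterate_twoUniversal_eq l
  rw [← hp] at h ⊢
  simpa [hw] using le_prefixWord_of_pred_eq twoUniversal_admissible h

theorem pred_injOn_predRepresentatives (n : ℕ) :
    Set.InjOn (Pred twoUniversal) (predRepresentatives n) := by
  have hz : ∀ l : List Bool, l.length = n + 1 →
      Pred twoUniversal (l.map binDigit) ≠ Pred twoUniversal (2 :: List.replicate n 0) := by
    intro l hl h
    have := le_of_pred_map_binDigit_eq (by simp [hl]) h
    obtain ⟨p, hp₀, hp⟩ := exists_prefixWord_shift_iterate_twoUniversal_eq l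
    rw [← hp, hl] at this
    exact not_two_cons_le_prefixWord (shift_iterate_twoUniversal_le_one hp₀ 0) _ _ this
  rintro _ (rfl | ⟨l, hl, rfl⟩) _ (rfl | ⟨l', hl', rfl⟩) h
  · rfl
  · exact absurd h.symm (hz l' hl')
  · exact absurd h (hz l hl)
  · have hlen : l.length = l'.length := Eq.trans hl hl'.symm
    exact le_antisymm (le_of_pred_map_binDigit_eq (by simp [hlen]) h.symm)
      (le_of_pred_map_binDigit_eq (by simp [hlen]) h)

theorem ncard_predRepresentatives (n : ℕ) : (predRepresentatives n).ncard = 2 ^ (n + 1) + 1 := by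
  have hnot : 2 :: List.replicate n 0 ∉ List.map binDigit '' {l | l.length = n + 1} := by
    rintro ⟨l, -, hl⟩
    have h2 : (2 : Fin 3) ∈ l.map binDigit := hl ▸ List.mem_cons_self
    obtain ⟨b, -, hb⟩ := List.mem_map.mp h2
    cases b <;> simp [binDigit] at hb
  rw [predRepresentatives, Set.ncard_insert_of_notMem hnot
    ((List.finite_length_eq Bool _).image _),
    (List.map_injective_iff.mpr binDigit_injective).injOn.ncard_image, ← Nat.card_coe_set_eq]
  change Nat.card (List.Vector Bool (n + 1)) + 1 = _
  simp

theorem predCount_twoUniversal (n : ℕ) : PredCount twoUniversal (n + 1) = 2 ^ (n + 1) + 1 := by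
  have hset : {S | ∃ w ∈ Lang twoUniversal, w.length = n + 1 ∧ S = Pred twoUniversal w} =
      Pred twoUniversal '' predRepresentatives n := by
    ext S
    constructor
    · rintro ⟨w, hw, hlen, rfl⟩
      obtain ⟨r, hr, heq⟩ := exists_pred_eq_pred_representative hw hlen
      exact ⟨r, hr, heq.symm⟩
    · rintro ⟨r, hr | ⟨l, hl, rfl⟩, rfl⟩
      · subst hr
        exact ⟨_, two_cons_replicate_mem_lang n, by simp, rfl⟩
      · exact ⟨_, map_binDigit_mem_lang l, by simpa using hl, rfl⟩
  rw [PredCount, hset, (pred_injOn_predRepresentatives n).ncard_image, ncard_predRepresentatives]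

end BetaShift

/-- there is a non-eventually-periodic admissible `d` over `Fin 3`
with `|F(n)| = n + 1` and `|P(n)| = 2^n + 1` for all `n ≥ 1`. -/
theorem stmt13 :
    ∃ d : ℕ → Fin 3, Admissible d ∧ ¬ EventuallyPeriodic d ∧
      ∀ n, 1 ≤ n → FolCount d n = n + 1 ∧ PredCount d n = 2 ^ n + 1 := by
  refine ⟨twoUniversal, twoUniversal_admissible, twoUniversal_not_eventuallyPeriodic,
    fun n hn => ⟨?_, ?_⟩⟩
  · exact folCount_eq twoUniversal_admissible twoUniversal_not_eventuallyPeriodic n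
  · obtain ⟨n, rfl⟩ := Nat.exists_eq_add_of_le' hn
    exact predCount_twoUniversal n
end

section
/- Let d : ℕ → A be admissible and not eventually periodic, and let n ≥ 1. For a word v ∈ L_n(X_d), say v belongs to class S_k (0 ≤ k ≤ n) if k is the largest t ≤ n such that (d)_t is a suffix of v. For a word w of length n occurring in d, let η(w) be the number of k ∈ {0, 1, …, n} such that there exists v ∈ S_k with v ≠ w and P(v) = P(w). Then the number of distinct extender sets of words of length n satisfies |E(n)| = Φ_n(d) + ∑_w η(w), where the sum is over all words w of length n occurring in d. -/
open BetaShift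

namespace BetaShift

section Sequences

variable {A : Type*}

def tail (x : ℕ → A) (t : ℕ) : ℕ → A := fun i => x (t + i)

@[simp] theorem tail_apply (x : ℕ → A) (t i : ℕ) : tail x t i = x (t + i) := rfl

@[simp] theorem tail_zero (x : ℕ → A) : tail x 0 = x := funext fun i => by simp

theorem tail_tail (x : ℕ → A) (s t : ℕ) : tail (tail x s) t = tail x (s + t) :=
  funext fun i => by simp [Nat.add_assoc]

theorem shift_iterate_eq_tail (x : ℕ → A) (t : ℕ) : shift^[t] x = tail x t := by
  induction t generalizing x with
  | zero => simp
  | succ t ih =>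
    rw [Function.iterate_succ_apply, ih]
    funext i
    simp [shift, Nat.add_right_comm, Nat.add_assoc]

theorem tail_injective_of_not_eventuallyPeriodic {d : ℕ → A} (hnp : ¬ EventuallyPeriodic d)
    {a b : ℕ} (hab : a ≠ b) : tail d a ≠ tail d b := by
  wlog h : a < b generalizing a b
  · exact fun he => this hab.symm (by omega) he.symm
  intro he
  refine hnp ⟨b - a, by omega, a, fun i hi => ?_⟩
  simpa [show b + (i - a) = i + (b - a) by omega, show a + (i - a) = i by omega]
    using (congrFun he (i - a)).symm

@[simp] theorem prefixWord_length (y : ℕ → A) (l : ℕ) : (prefixWord y l).length = l :=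
  List.length_ofFn

theorem prefixWord_append_prefixWord_tail (x : ℕ → A) (a b : ℕ) :
    prefixWord x a ++ prefixWord (tail x a) b = prefixWord x (a + b) := by
  simp only [prefixWord, List.ofFn_add (f := fun i : Fin (a + b) => x i)]
  rfl

theorem eq_before_of_prefixWord_eq {x y : ℕ → A} {l : ℕ}
    (h : prefixWord x l = prefixWord y l) : ∀ i < l, x i = y i :=
  fun i hi => congrFun (List.ofFn_inj.mp h) ⟨i, hi⟩

variable [LinearOrder A] {x y z : ℕ → A}

theorem seqLe_iff_toLex_le : SeqLe x y ↔ toLex x ≤ toLex y := by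
  rw [le_iff_eq_or_lt]
  exact or_congr toLex_inj.symm Iff.rfl

@[refl] theorem SeqLe.refl (x : ℕ → A) : SeqLe x x := Or.inl rfl

theorem SeqLe.trans (hxy : SeqLe x y) (hyz : SeqLe y z) : SeqLe x z := by
  rw [seqLe_iff_toLex_le] at *
  exact hxy.trans hyz

theorem SeqLe.antisymm (hxy : SeqLe x y) (hyx : SeqLe y x) : x = y := by
  rw [seqLe_iff_toLex_le] at *
  exact toLex_inj.mp (hxy.antisymm hyx)

theorem seqLe_total (x y : ℕ → A) : SeqLe x y ∨ SeqLe y x := by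
  simp only [seqLe_iff_toLex_le]
  exact le_total _ _

theorem seqLe_of_le (h : x ≤ y) : SeqLe x y :=
  seqLe_iff_toLex_le.mpr (Pi.toLex_monotone h)

theorem seqLe_iff_lt_before_or_eq_before (l : ℕ) :
    SeqLe x y ↔ (∃ i < l, (∀ j < i, x j = y j) ∧ x i < y i) ∨
      ((∀ i < l, x i = y i) ∧ SeqLe (tail x l) (tail y l)) := by
  constructor
  · rintro (rfl | ⟨i, hagree, hlt⟩)
    · exact Or.inr ⟨fun _ _ => rfl, .refl _⟩
    by_cases hil : i < l
    · exact Or.inl ⟨i, hil, hagree, hlt⟩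
    · refine Or.inr ⟨fun j hj => hagree j (by omega),
        Or.inr ⟨i - l, fun j hj => hagree _ (by omega), ?_⟩⟩
      simpa [show l + (i - l) = i by omega] using hlt
  · rintro (⟨i, -, hagree, hlt⟩ | ⟨heq, htail | ⟨i, hagree, hlt⟩⟩)
    · exact Or.inr ⟨i, hagree, hlt⟩
    · refine Or.inl (funext fun j => ?_)
      by_cases hjl : j < l
      · exact heq j hjl
      · simpa [show l + (j - l) = j by omega] using congrFun htail (j - l)
    · refine Or.inr ⟨l + i, fun j hj => ?_, hlt⟩
      by_cases hjl : j < l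
      · exact heq j hjl
      · simpa [show l + (j - l) = j by omega] using hagree (j - l) (by omega)

theorem SeqLe.tail_of_eq_before {l : ℕ} (h : SeqLe x y) (hxy : ∀ i < l, x i = y i) :
    SeqLe (tail x l) (tail y l) := by
  rcases (seqLe_iff_lt_before_or_eq_before l).mp h with ⟨i, hil, -, hlt⟩ | ⟨-, htail⟩
  · exact absurd (hxy i hil) hlt.ne
  · exact htail

theorem exists_prefix_separating (h : SeqLe x y) (hne : x ≠ y) :
    ∃ l, ∀ z : ℕ → A, (∀ i < l, z i = y i) → ¬ SeqLe z x := by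
  obtain ⟨i, hagree, hlt⟩ := h.resolve_left hne
  refine ⟨i + 1, fun z hz hzx => (seqLe_iff_toLex_le.mp hzx).not_gt ?_⟩
  refine ⟨i, fun j hj => ?_, ?_⟩
  · simp [hagree j hj, hz j (by omega)]
  · simpa [hz i (by omega)] using hlt

end Sequences

section Words

variable {m : ℕ} [NeZero m]

/-- Words are compared with sequences through their zero padding; as `0` is the least letter,
`SeqLe (pad w) y` says that `w` is at most the prefix of `y` of length `|w|`. -/
def pad (w : List (Fin m)) : ℕ → Fin m := fun i => w.getD i 0

theorem pad_of_lt {w : List (Fin m)} {i : ℕ} (h : i < w.length) : pad w i = w[i] := by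
  simp [pad, List.getD_eq_getElem?_getD, h]

theorem pad_of_le {w : List (Fin m)} {i : ℕ} (h : w.length ≤ i) : pad w i = 0 := by
  simp [pad, List.getD_eq_getElem?_getD, h]

theorem pad_append (a b : List (Fin m)) (i : ℕ) :
    pad (a ++ b) i = if i < a.length then pad a i else pad b (i - a.length) := by
  simp only [pad, List.getD_eq_getElem?_getD, List.getElem?_append]
  split <;> rfl

theorem pad_append_of_lt {a : List (Fin m)} (b : List (Fin m)) {i : ℕ} (h : i < a.length) :
    pad (a ++ b) i = pad a i := by
  rw [pad_append, if_pos h]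

theorem tail_pad_append (a b : List (Fin m)) : tail (pad (a ++ b)) a.length = pad b :=
  funext fun i => by simp [pad_append]

theorem pad_drop (w : List (Fin m)) (j : ℕ) : pad (w.drop j) = tail (pad w) j :=
  funext fun i => by simp [pad, List.getD_eq_getElem?_getD]

theorem pad_prefixWord (y : ℕ → Fin m) (l i : ℕ) :
    pad (prefixWord y l) i = if i < l then y i else 0 := by
  split_ifs with h
  · rw [pad_of_lt (by simpa [prefixWord] using h)]
    simp [prefixWord]
  · exact pad_of_le (by simpa [prefixWord] using h)

theorem eq_of_pad_eq {a b : List (Fin m)} (hl : a.length = b.length) (h : pad a = pad b) :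
    a = b :=
  List.ext_getElem hl fun i ha hb => by
    rw [← pad_of_lt ha, ← pad_of_lt hb, h]

theorem pad_le_pad_prefixWord (y : ℕ → Fin m) (l : ℕ) : pad (prefixWord y l) ≤ y :=
  fun i => by rw [pad_prefixWord]; split_ifs <;> simp

def IsHead (w : List (Fin m)) (y : ℕ → Fin m) : Prop :=
  ∀ i < w.length, pad w i = y i

def HeadLt (w : List (Fin m)) (y : ℕ → Fin m) : Prop :=
  ∃ i < w.length, (∀ j < i, pad w j = y j) ∧ pad w i < y i

variable {w a b : List (Fin m)} {x y : ℕ → Fin m}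

theorem IsHead.eq_prefixWord (h : IsHead w y) : w = prefixWord y w.length := by
  refine eq_of_pad_eq (by simp) (funext fun i => ?_)
  rw [pad_prefixWord]
  split_ifs with hi
  · exact h i hi
  · exact pad_of_le (not_lt.mp hi)

theorem isHead_prefixWord (y : ℕ → Fin m) (l : ℕ) : IsHead (prefixWord y l) y :=
  fun i hi => by simp_all [pad_prefixWord]

theorem IsHead.seqLe (h : IsHead w y) : SeqLe (pad w) y := by
  rw [h.eq_prefixWord]
  exact seqLe_of_le (pad_le_pad_prefixWord y _)

theorem HeadLt.seqLe (h : HeadLt w y) : SeqLe (pad w) y :=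
  let ⟨i, _, hagree, hlt⟩ := h
  Or.inr ⟨i, hagree, hlt⟩

theorem HeadLt.not_isHead (h : HeadLt w y) : ¬ IsHead w y := fun hw =>
  let ⟨i, hi, _, hlt⟩ := h
  hlt.ne (hw i hi)

theorem not_headLt_prefixWord (y : ℕ → Fin m) (l : ℕ) : ¬ HeadLt (prefixWord y l) y :=
  fun h => h.not_isHead (isHead_prefixWord y l)

theorem headLt_or_isHead_of_seqLe (h : SeqLe (pad w) y) : HeadLt w y ∨ IsHead w y := by
  rcases h with heq | ⟨i, hagree, hlt⟩
  · exact Or.inr fun i _ => congrFun heq i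
  by_cases hi : i < w.length
  · exact Or.inl ⟨i, hi, hagree, hlt⟩
  · exact Or.inr fun j hj => hagree j (by omega)

theorem headLt_iff_seqLe_and_not_isHead : HeadLt w y ↔ SeqLe (pad w) y ∧ ¬ IsHead w y :=
  ⟨fun h => ⟨h.seqLe, h.not_isHead⟩,
    fun ⟨h, hn⟩ => (headLt_or_isHead_of_seqLe h).resolve_right hn⟩

theorem seqLe_iff_headLt_prefixWord_or (l : ℕ) :
    SeqLe x y ↔ HeadLt (prefixWord x l) y ∨
      (IsHead (prefixWord x l) y ∧ SeqLe (tail x l) (tail y l)) := by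
  have h : ∀ i < l, pad (prefixWord x l) i = x i := fun i hi => by simp [pad_prefixWord, hi]
  rw [seqLe_iff_lt_before_or_eq_before l, HeadLt, IsHead, prefixWord_length]
  refine or_congr (exists_congr fun i => and_congr_right fun hi => and_congr ?_ ?_)
    (and_congr_left' (forall₂_congr fun j hj => by rw [h j hj]))
  · exact forall₂_congr fun j hj => by rw [h j (hj.trans hi)]
  · rw [h i hi]

theorem SeqLe.headLt_or_isHead_prefixWord (h : SeqLe x y) (l : ℕ) :
    HeadLt (prefixWord x l) y ∨ (IsHead (prefixWord x l) y ∧ SeqLe (tail x l) (tail y l)) :=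
  (seqLe_iff_headLt_prefixWord_or l).mp h

theorem seqLe_pad_append_iff :
    SeqLe (pad (a ++ b)) y ↔ HeadLt a y ∨ (IsHead a y ∧ SeqLe (pad b) (tail y a.length)) := by
  have ha : prefixWord (pad (a ++ b)) a.length = a :=
    (IsHead.eq_prefixWord (w := a) fun i hi => (pad_append_of_lt b hi).symm).symm
  rw [seqLe_iff_headLt_prefixWord_or a.length, ha, tail_pad_append]

theorem seqLe_pad_append_iff_of_not_isHead (h : ¬ IsHead a y) :
    SeqLe (pad (a ++ b)) y ↔ SeqLe (pad a) y := by
  simp [seqLe_pad_append_iff, headLt_iff_seqLe_and_not_isHead, h]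

theorem seqLe_pad_iff_seqLe_pad_prefixWord :
    SeqLe (pad w) y ↔ SeqLe (pad w) (pad (prefixWord y w.length)) := by
  have h : ∀ i < w.length, pad (prefixWord y w.length) i = y i := fun i hi => by
    simp [pad_prefixWord, hi]
  refine ⟨fun hw => ?_, fun hw => hw.trans (seqLe_of_le (pad_le_pad_prefixWord y _))⟩
  rcases headLt_or_isHead_of_seqLe hw with ⟨i, hi, hagree, hlt⟩ | hhead
  · exact Or.inr ⟨i, fun j hj => by rw [hagree j hj, h j (hj.trans hi)], by rwa [h i hi]⟩
  · rw [← hhead.eq_prefixWord]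

theorem prefixWord_drop (x : ℕ → Fin m) (l j : ℕ) :
    (prefixWord x l).drop j = prefixWord (tail x j) (l - j) := by
  refine eq_of_pad_eq (by simp) (funext fun i => ?_)
  simp only [pad_drop, tail_apply, pad_prefixWord]
  split_ifs <;> first | rfl | omega

theorem seqLe_of_eq_before_of_eq_zero {z : ℕ → Fin m} {k : ℕ} (h : SeqLe x z)
    (hyx : ∀ i < k, y i = x i) (hy : ∀ i, k ≤ i → y i = 0) : SeqLe y z := by
  rcases (seqLe_iff_lt_before_or_eq_before k).mp h with ⟨i, hik, hagree, hlt⟩ | ⟨heq, -⟩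
  · refine Or.inr ⟨i, fun j hj => by rw [hyx j (hj.trans hik), hagree j hj], ?_⟩
    rwa [hyx i hik]
  · refine (seqLe_iff_lt_before_or_eq_before k).mpr (Or.inr ⟨fun i hi => ?_, seqLe_of_le ?_⟩)
    · rw [hyx i hi, heq i hi]
    · intro i
      simp [hy (k + i) (by omega)]

end Words

section Language

variable {m : ℕ} {d : ℕ → Fin m} {w v s u : List (Fin m)}

theorem mem_XSet_iff {x : ℕ → Fin m} : x ∈ XSet d ↔ ∀ t, SeqLe (tail x t) d := by
  simp [XSet, shift_iterate_eq_tail]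

theorem Admissible.seqLe_tail (hd : Admissible d) (t : ℕ) : SeqLe (tail d t) d := by
  simpa [shift_iterate_eq_tail] using hd.1 t

theorem Admissible.mem_lang_of_occurs (hd : Admissible d) (h : Occurs w d) : w ∈ Lang d :=
  ⟨d, mem_XSet_iff.mpr hd.seqLe_tail, h⟩

variable [NeZero m]

theorem occurs_iff_exists_isHead {x : ℕ → Fin m} :
    Occurs w x ↔ ∃ t, IsHead w (tail x t) := by
  refine exists_congr fun t => ⟨fun h i hi => ?_, fun h j => ?_⟩
  · simpa [pad_of_lt hi] using (h ⟨i, hi⟩).symm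
  · simpa [pad_of_lt j.2] using (h j j.2).symm

theorem mem_lang_iff_s16 : w ∈ Lang d ↔ ∀ j, SeqLe (pad (w.drop j)) d := by
  constructor
  · rintro ⟨x, hx, hocc⟩ j
    obtain ⟨t, ht⟩ := occurs_iff_exists_isHead.mp hocc
    refine seqLe_of_eq_before_of_eq_zero (mem_XSet_iff.mp hx (t + j)) (k := w.length - j)
      (fun i hi => ?_) (fun i hi => pad_of_le (by simp; omega))
    simpa [pad_drop, Nat.add_assoc] using ht (j + i) (by omega)
  · intro h
    refine ⟨pad w, mem_XSet_iff.mpr fun t => by simpa [pad_drop] using h t,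
      occurs_iff_exists_isHead.mpr ⟨0, fun i _ => by simp⟩⟩

theorem append_mem_lang_iff_s16 {x : List (Fin m)} :
    s ++ x ∈ Lang d ↔ x ∈ Lang d ∧ ∀ j < s.length, HeadLt (s.drop j) d ∨
      (IsHead (s.drop j) d ∧ SeqLe (pad x) (tail d (s.length - j))) := by
  have hdrop : ∀ j < s.length, SeqLe (pad ((s ++ x).drop j)) d ↔
      HeadLt (s.drop j) d ∨ (IsHead (s.drop j) d ∧ SeqLe (pad x) (tail d (s.length - j))) :=
    fun j hj => by rw [List.drop_append_of_le_length hj.le, seqLe_pad_append_iff, List.length_drop]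
  simp only [mem_lang_iff_s16]
  constructor
  · intro h
    exact ⟨fun i => by simpa using h (s.length + i), fun j hj => (hdrop j hj).mp (h j)⟩
  · rintro ⟨hx, hs⟩ j
    rcases lt_or_ge j s.length with hj | hj
    · exact (hdrop j hj).mpr (hs j hj)
    · obtain ⟨i, rfl⟩ := Nat.exists_eq_add_of_le hj
      simpa using hx i

theorem seqLe_tail_of_prefixWord_append_mem_lang {t : ℕ} (h : prefixWord d t ++ u ∈ Lang d) :
    SeqLe (pad u) (tail d t) := by
  have h0 := mem_lang_iff_s16.mp h 0
  rw [List.drop_zero, seqLe_pad_append_iff] at h0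
  simpa using (h0.resolve_left (not_headLt_prefixWord d t)).2

theorem Admissible.prefixWord_tail_mem_lang (hd : Admissible d) (t l : ℕ) :
    prefixWord (tail d t) l ∈ Lang d :=
  hd.mem_lang_of_occurs (occurs_iff_exists_isHead.mpr ⟨t, isHead_prefixWord _ _⟩)

theorem Admissible.seqLe_tail_of_isSuffix (hd : Admissible d) {a b : ℕ}
    (h : prefixWord d a <:+ prefixWord d b) : SeqLe (tail d b) (tail d a) := by
  have hab : a ≤ b := by simpa using h.length_le
  rw [List.suffix_iff_eq_drop, prefixWord_drop] at h
  simp only [prefixWord_length] at h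
  have := (hd.seqLe_tail (b - a)).tail_of_eq_before (eq_before_of_prefixWord_eq
    (by rw [h, show b - (b - a) = a by omega]))
  rwa [tail_tail, show b - a + a = b by omega] at this

end Language

section Predecessors

variable {m : ℕ} [NeZero m] {d : ℕ → Fin m} {w v s x : List (Fin m)}

def dominatingShifts (d : ℕ → Fin m) (w : List (Fin m)) : Set ℕ :=
  {t | SeqLe (pad w) (tail d t)}

theorem append_mem_lang_iff_dominatingShifts (hw : w ∈ Lang d) :
    s ++ w ∈ Lang d ↔ ∀ j < s.length, HeadLt (s.drop j) d ∨
      (IsHead (s.drop j) d ∧ s.length - j ∈ dominatingShifts d w) := by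
  rw [append_mem_lang_iff_s16, and_iff_right hw]
  rfl

theorem Admissible.prefixWord_append_mem_lang_iff (hd : Admissible d) (hw : w ∈ Lang d)
    (t : ℕ) : prefixWord d t ++ w ∈ Lang d ↔ t ∈ dominatingShifts d w := by
  refine ⟨seqLe_tail_of_prefixWord_append_mem_lang, fun ht => ?_⟩
  rw [append_mem_lang_iff_dominatingShifts hw, prefixWord_length]
  intro j hj
  rw [prefixWord_drop]
  rcases (hd.seqLe_tail j).headLt_or_isHead_prefixWord (t - j) with h | ⟨h, hle⟩
  · exact Or.inl h
  · refine Or.inr ⟨h, SeqLe.trans ht ?_⟩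
    rwa [tail_tail, show j + (t - j) = t by omega] at hle

theorem Admissible.pred_eq_pred_iff (hd : Admissible d) (hw : w ∈ Lang d) (hv : v ∈ Lang d) :
    Pred d w = Pred d v ↔ dominatingShifts d w = dominatingShifts d v := by
  refine ⟨fun h => Set.ext fun t => ?_, fun h => Set.ext fun s => ?_⟩
  · rw [← hd.prefixWord_append_mem_lang_iff hw, ← hd.prefixWord_append_mem_lang_iff hv]
    exact Set.ext_iff.mp h _
  · exact (append_mem_lang_iff_dominatingShifts hw).trans
      (by rw [h, ← append_mem_lang_iff_dominatingShifts hv]; rfl)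

theorem mem_dominatingShifts_iff_of_isHead {t : ℕ} (hx : IsHead x (tail d t))
    (hl : v.length = x.length) : t ∈ dominatingShifts d v ↔ SeqLe (pad v) (pad x) := by
  change SeqLe (pad v) (tail d t) ↔ _
  rw [seqLe_pad_iff_seqLe_pad_prefixWord, hl, ← hx.eq_prefixWord]

theorem Admissible.eq_of_occurs_of_pred_eq (hd : Admissible d) {x' : List (Fin m)}
    (hx : Occurs x d) (hx' : Occurs x' d) (hl : x.length = x'.length)
    (h : Pred d x = Pred d x') : x = x' := by
  have hT := (hd.pred_eq_pred_iff (hd.mem_lang_of_occurs hx) (hd.mem_lang_of_occurs hx')).mp h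
  obtain ⟨t, ht⟩ := occurs_iff_exists_isHead.mp hx
  obtain ⟨t', ht'⟩ := occurs_iff_exists_isHead.mp hx'
  have hle : SeqLe (pad x') (pad x) :=
    (mem_dominatingShifts_iff_of_isHead ht hl.symm).mp (hT ▸ ht.seqLe)
  have hge : SeqLe (pad x) (pad x') :=
    (mem_dominatingShifts_iff_of_isHead ht' hl).mp (hT ▸ ht'.seqLe)
  exact eq_of_pad_eq hl (hge.antisymm hle)

/-- The witness is the lexicographically least subword of `d` of length `|v|` lying above `v`. -/
theorem Admissible.exists_occurs_pred_eq (hd : Admissible d) (hv : v ∈ Lang d) :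
    ∃ x, x.length = v.length ∧ Occurs x d ∧ Pred d x = Pred d v := by
  set S := {x : List (Fin m) | (x.length = v.length ∧ Occurs x d) ∧ SeqLe (pad v) (pad x)}
  have hseg : ∀ t, prefixWord (tail d t) v.length ∈ S ↔ t ∈ dominatingShifts d v := by
    intro t
    have ht := isHead_prefixWord (tail d t) v.length
    rw [mem_dominatingShifts_iff_of_isHead ht (prefixWord_length _ _).symm]
    exact ⟨fun h => h.2,
      fun h => ⟨⟨prefixWord_length _ _, occurs_iff_exists_isHead.mpr ⟨t, ht⟩⟩, h⟩⟩
  have hS : S.Finite := (List.finite_length_eq (Fin m) v.length).subset fun x hx => hx.1.1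
  have hS0 : S.Nonempty :=
    ⟨_, (hseg 0).mpr (by simpa [dominatingShifts] using mem_lang_iff_s16.mp hv 0)⟩
  obtain ⟨x, ⟨⟨hxl, hx⟩, hvx⟩, hmin⟩ :=
    S.exists_min_image (fun x => toLex (pad x)) hS hS0
  refine ⟨x, hxl, hx, (hd.pred_eq_pred_iff (hd.mem_lang_of_occurs hx) hv).mpr
    (Set.ext fun t => ⟨fun ht => hvx.trans ht, fun ht => ?_⟩)⟩
  have hxt := seqLe_iff_toLex_le.mpr (hmin _ ((hseg t).mpr ht))
  exact (mem_dominatingShifts_iff_of_isHead (isHead_prefixWord (tail d t) v.length)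
    (by simp [hxl])).mpr hxt

end Predecessors

section Followers

variable {m : ℕ} {d : ℕ → Fin m} {w v : List (Fin m)} {n : ℕ}

theorem classIndex_le (d : ℕ → Fin m) (n : ℕ) (v : List (Fin m)) : classIndex d n v ≤ n :=
  Nat.findGreatest_le n

theorem prefixWord_classIndex_isSuffix (d : ℕ → Fin m) (n : ℕ) (v : List (Fin m)) :
    prefixWord d (classIndex d n v) <:+ v :=
  Nat.findGreatest_spec (P := fun k => prefixWord d k <:+ v) (Nat.zero_le n)
    (by simp [prefixWord])

theorem le_classIndex {t : ℕ} (h : t ≤ n) (hs : prefixWord d t <:+ v) :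
    t ≤ classIndex d n v :=
  Nat.le_findGreatest h hs

variable [NeZero m]

def classFollowers (d : ℕ → Fin m) (k : ℕ) : Set (List (Fin m)) :=
  {u | u ∈ Lang d ∧ SeqLe (pad u) (tail d k)}

theorem Admissible.fol_eq_classFollowers (hd : Admissible d) (hw : w ∈ Lang d)
    (hwn : w.length = n) : Fol d w = classFollowers d (classIndex d n w) := by
  subst hwn
  set k := classIndex d w.length w
  have hk : prefixWord d k <:+ w := prefixWord_classIndex_isSuffix d _ w
  ext u
  refine append_mem_lang_iff_s16.trans (and_congr_right fun hu => ⟨fun h => ?_, fun h j hj => ?_⟩)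
  · rcases Nat.eq_zero_or_pos k with hk0 | hkpos
    · simpa [hk0] using mem_lang_iff_s16.mp hu 0
    have hwk : w.drop (w.length - k) = prefixWord d k := by
      rw [List.suffix_iff_eq_drop.mp hk, prefixWord_length]
    have := h (w.length - k) (by have := classIndex_le d w.length w; omega)
    rw [hwk, show w.length - (w.length - k) = k by have := classIndex_le d w.length w; omega]
      at this
    exact (this.resolve_left (not_headLt_prefixWord d k)).2
  · rcases headLt_or_isHead_of_seqLe (mem_lang_iff_s16.mp hw j) with hlt | hhead
    · exact Or.inl hlt
    have hs : prefixWord d (w.length - j) <:+ w := by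
      have := List.drop_suffix j w
      rwa [hhead.eq_prefixWord, List.length_drop] at this
    refine Or.inr ⟨hhead, h.trans (hd.seqLe_tail_of_isSuffix ?_)⟩
    exact List.suffix_of_suffix_length_le hs hk (by simpa using le_classIndex (by omega) hs)

theorem Admissible.classFollowers_injective (hd : Admissible d) (hnp : ¬ EventuallyPeriodic d) :
    Function.Injective (classFollowers d) := by
  intro a b h
  by_contra hab
  wlog hba : SeqLe (tail d b) (tail d a) generalizing a b
  · exact this h.symm (Ne.symm hab) ((seqLe_total _ _).resolve_left hba)
  obtain ⟨l, hl⟩ :=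
    exists_prefix_separating hba (tail_injective_of_not_eventuallyPeriodic hnp (Ne.symm hab))
  have hu : prefixWord (tail d a) l ∈ classFollowers d a :=
    ⟨hd.prefixWord_tail_mem_lang a l, seqLe_of_le (pad_le_pad_prefixWord _ _)⟩
  rw [h] at hu
  exact hl _ (fun i hi => by simp [pad_prefixWord, hi]) hu.2

theorem Admissible.classIndex_eq_of_fol_eq (hd : Admissible d) (hnp : ¬ EventuallyPeriodic d)
    (hw : w ∈ Lang d) (hwn : w.length = n) (hv : v ∈ Lang d) (hvn : v.length = n)
    (h : Fol d w = Fol d v) : classIndex d n w = classIndex d n v :=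
  hd.classFollowers_injective hnp <| by
    rw [← hd.fol_eq_classFollowers hw hwn, h, hd.fol_eq_classFollowers hv hvn]

end Followers

section Extenders

variable {m : ℕ} {d : ℕ → Fin m} {w v x : List (Fin m)}

theorem pred_eq_of_ext_eq (h : Ext d w = Ext d v) : Pred d w = Pred d v :=
  Set.ext fun s => by simpa [Ext, Pred] using Set.ext_iff.mp h (s, [])

theorem fol_eq_of_ext_eq (h : Ext d w = Ext d v) : Fol d w = Fol d v :=
  Set.ext fun u => by simpa [Ext, Fol] using Set.ext_iff.mp h ([], u)

variable [NeZero m]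

/-- In `s w u`, the words `s` and `u` interact only through positions where a suffix of `s` is a
prefix of `d` that continues, in `d`, with `w`. -/
theorem ext_eq_pred_prod_fol (hw : w ∈ Lang d)
    (hocc : ∀ t, 1 ≤ t → ¬ IsHead w (tail d t)) : Ext d w = Pred d w ×ˢ Fol d w := by
  ext ⟨s, u⟩
  change s ++ w ++ u ∈ Lang d ↔ s ++ w ∈ Lang d ∧ w ++ u ∈ Lang d
  have hcut : ∀ j < s.length, SeqLe (pad (w ++ u)) (tail d (s.length - j)) ↔
      SeqLe (pad w) (tail d (s.length - j)) :=
    fun j hj => seqLe_pad_append_iff_of_not_isHead (hocc _ (by omega))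
  rw [List.append_assoc, append_mem_lang_iff_s16, append_mem_lang_iff_s16 (x := w), and_iff_right hw]
  constructor
  · rintro ⟨hwu, hs⟩
    exact ⟨fun j hj => (hs j hj).imp_right (And.imp_right (hcut j hj).mp), hwu⟩
  · rintro ⟨hs, hwu⟩
    exact ⟨hwu, fun j hj => (hs j hj).imp_right (And.imp_right (hcut j hj).mpr)⟩

/-- The witness is `((d)_t, u)` with `u` a prefix of `σ^k d`, `k` the class of `w`: `u` follows `w`
but not `(d)_t w = (d)_(t+|w|)`, because `σ^(t+|w|) d` is strictly below `σ^k d`. -/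
theorem Admissible.ext_ne_pred_prod_fol (hd : Admissible d) (hnp : ¬ EventuallyPeriodic d)
    {t : ℕ} (ht : 1 ≤ t) (hwt : IsHead w (tail d t)) : Ext d w ≠ Pred d w ×ˢ Fol d w := by
  set k := classIndex d w.length w
  have hdw : prefixWord d t ++ w = prefixWord d (t + w.length) := by
    conv_lhs => rw [hwt.eq_prefixWord]
    rw [prefixWord_append_prefixWord_tail]
  have hw : w ∈ Lang d := hd.mem_lang_of_occurs (occurs_iff_exists_isHead.mpr ⟨t, hwt⟩)
  have hk : k ≤ w.length := classIndex_le d _ w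
  have hle : SeqLe (tail d (t + w.length)) (tail d k) := hd.seqLe_tail_of_isSuffix <|
    (prefixWord_classIndex_isSuffix d _ w).trans (hdw ▸ List.suffix_append _ _)
  obtain ⟨l, hl⟩ := exists_prefix_separating hle
    (tail_injective_of_not_eventuallyPeriodic hnp (by omega))
  have hu : prefixWord (tail d k) l ∈ Fol d w := by
    rw [hd.fol_eq_classFollowers hw rfl]
    exact ⟨hd.prefixWord_tail_mem_lang k l, seqLe_of_le (pad_le_pad_prefixWord _ _)⟩
  have hs : prefixWord d t ∈ Pred d w := by
    change prefixWord d t ++ w ∈ Lang d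
    simpa [hdw] using hd.prefixWord_tail_mem_lang 0 (t + w.length)
  intro h
  have hmem : (prefixWord d t, prefixWord (tail d k) l) ∈ Ext d w := by
    rw [h]
    exact ⟨hs, hu⟩
  change prefixWord d t ++ w ++ _ ∈ Lang d at hmem
  rw [hdw] at hmem
  exact hl _ (fun i hi => by simp [pad_prefixWord, hi])
    (seqLe_tail_of_prefixWord_append_mem_lang hmem)

theorem Admissible.ext_ne_ext_of_not_occurs (hd : Admissible d) (hnp : ¬ EventuallyPeriodic d)
    (hx : Occurs x d) (hv : v ∈ Lang d) (hvx : v.length = x.length) (hvd : ¬ Occurs v d) :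
    Ext d v ≠ Ext d x := by
  intro hext
  have hxL : x ∈ Lang d := hd.mem_lang_of_occurs hx
  have hvocc : ∀ t, ¬ IsHead v (tail d t) := fun t hvt =>
    hvd (occurs_iff_exists_isHead.mpr ⟨t, hvt⟩)
  obtain ⟨t, ht⟩ := occurs_iff_exists_isHead.mp hx
  rcases Nat.eq_zero_or_pos t with rfl | ht1
  · have hxd : x = prefixWord d x.length := by simpa using ht.eq_prefixWord
    have hclx : classIndex d x.length x = x.length :=
      le_antisymm (classIndex_le d _ x) (le_classIndex le_rfl (hxd ▸ List.suffix_refl _))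
    have hsuf := prefixWord_classIndex_isSuffix d x.length v
    rw [hd.classIndex_eq_of_fol_eq hnp hv hvx hxL rfl (fol_eq_of_ext_eq hext), hclx, ← hxd]
      at hsuf
    exact hvd (hsuf.eq_of_length hvx.symm ▸ hx)
  · refine hd.ext_ne_pred_prod_fol hnp ht1 ht ?_
    rw [← hext, ext_eq_pred_prod_fol hv fun t _ => hvocc t, pred_eq_of_ext_eq hext,
      fol_eq_of_ext_eq hext]

end Extenders

section Counting

theorem ncard_image_eq_finsum_ncard_image_fiber {α β γ : Type*} {f : α → β} {g : α → γ}
    {S R : Set α} (hS : S.Finite) (hRS : R ⊆ S)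
    (hfg : ∀ a ∈ S, ∀ b ∈ S, f a = f b → g a = g b)
    (hex : ∀ a ∈ S, ∃ r ∈ R, g r = g a) (hR : Set.InjOn g R) :
    (f '' S).ncard = ∑ᶠ r ∈ R, (f '' {a ∈ S | g a = g r}).ncard := by
  have hcover : f '' S = ⋃ r ∈ R, f '' {a ∈ S | g a = g r} := by
    ext b
    simp only [Set.mem_image, Set.mem_iUnion, Set.mem_ofPred_eq]
    constructor
    · rintro ⟨a, ha, rfl⟩
      obtain ⟨r, hr, hg⟩ := hex a ha
      exact ⟨r, hr, a, ⟨ha, hg.symm⟩, rfl⟩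
    · rintro ⟨r, -, a, ⟨ha, -⟩, rfl⟩
      exact ⟨a, ha, rfl⟩
  rw [hcover]
  refine (hS.subset hRS).ncard_biUnion (fun r _ => (hS.subset fun a ha => ha.1).image f) ?_
  intro r hr r' hr' hne
  refine Set.disjoint_left.mpr ?_
  rintro _ ⟨a, ⟨ha, hga⟩, rfl⟩ ⟨a', ⟨ha', hga'⟩, hf⟩
  exact hne (hR hr hr' (by rw [← hga, ← hga', hfg a' ha' a ha hf]))

variable {m : ℕ} {d : ℕ → Fin m} {n : ℕ} {x : List (Fin m)}

/-- `η(w)` of the statement is the cardinality of this set. -/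
def predTwinClasses (d : ℕ → Fin m) (n : ℕ) (w : List (Fin m)) : Set ℕ :=
  {k | k ≤ n ∧ ∃ v ∈ Lang d, v.length = n ∧
    classIndex d n v = k ∧ v ≠ w ∧ Pred d v = Pred d w}

variable [NeZero m]

theorem Admissible.ncard_ext_image_pred_fiber (hd : Admissible d) (hnp : ¬ EventuallyPeriodic d)
    (hx : Occurs x d) (hxn : x.length = n) :
    (Ext d '' {v | (v ∈ Lang d ∧ v.length = n) ∧ Pred d v = Pred d x}).ncard =
      1 + (predTwinClasses d n x).ncard := by
  set F := {v | (v ∈ Lang d ∧ v.length = n) ∧ Pred d v = Pred d x}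
  have hxL : x ∈ Lang d := hd.mem_lang_of_occurs hx
  have hxF : x ∈ F := ⟨⟨hxL, hxn⟩, rfl⟩
  have hFfin : F.Finite := (List.finite_length_eq (Fin m) n).subset fun v hv => hv.1.2
  have hnocc : ∀ v ∈ F \ {x}, ¬ Occurs v d := fun v ⟨⟨⟨_, hvn⟩, hvx⟩, hne⟩ hv =>
    hne (hd.eq_of_occurs_of_pred_eq hv hx (by rw [hvn, hxn]) hvx)
  have hext : ∀ v ∈ F \ {x}, Ext d v = Pred d x ×ˢ classFollowers d (classIndex d n v) := by
    intro v hvF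
    have hv := hvF.1.1
    rw [ext_eq_pred_prod_fol hv.1 fun t _ hvt =>
        hnocc v hvF (occurs_iff_exists_isHead.mpr ⟨t, hvt⟩),
      hvF.1.2, hd.fol_eq_classFollowers hv.1 hv.2]
  have hK : predTwinClasses d n x = classIndex d n '' (F \ {x}) := by
    ext k
    constructor
    · rintro ⟨-, v, hv, hvn, rfl, hne, hvx⟩
      exact ⟨v, ⟨⟨⟨hv, hvn⟩, hvx⟩, hne⟩, rfl⟩
    · rintro ⟨v, ⟨⟨⟨hv, hvn⟩, hvx⟩, hne⟩, rfl⟩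
      exact ⟨classIndex_le d n v, v, hv, hvn, rfl, hne, hvx⟩
  have hinj : Function.Injective fun k => Pred d x ×ˢ classFollowers d k := fun a b h =>
    hd.classFollowers_injective hnp <| Set.ext fun u => by
      simpa [show [] ∈ Pred d x from hxL] using Set.ext_iff.mp h ([], u)
  have hxnot : Ext d x ∉ Ext d '' (F \ {x}) := fun ⟨v, hvF, hvext⟩ =>
    hd.ext_ne_ext_of_not_occurs hnp hx hvF.1.1.1 (hvF.1.1.2.trans hxn.symm) (hnocc v hvF) hvext
  calc (Ext d '' F).ncard = (insert (Ext d x) (Ext d '' (F \ {x}))).ncard := by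
        rw [← Set.image_insert_eq, Set.insert_sdiff_singleton, Set.insert_eq_of_mem hxF]
    _ = (predTwinClasses d n x).ncard + 1 := by
        rw [Set.ncard_insert_of_notMem hxnot (hFfin.sdiff.image _), Set.image_congr hext,
          ← Set.image_image (fun k => Pred d x ×ˢ classFollowers d k), ← hK,
          hinj.injOn.ncard_image]
    _ = 1 + (predTwinClasses d n x).ncard := add_comm _ _

end Counting

end BetaShift

theorem stmt16_general (m : ℕ) (d : ℕ → Fin m) (hd : Admissible d)
    (hnp : ¬ EventuallyPeriodic d) (n : ℕ) :
    ExtCount d n = Complexity d n +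
      ∑ᶠ w ∈ {w : List (Fin m) | w.length = n ∧ Occurs w d},
        Set.ncard {k : ℕ | k ≤ n ∧ ∃ v ∈ Lang d, v.length = n ∧
          classIndex d n v = k ∧ v ≠ w ∧ Pred d v = Pred d w} := by
  have : NeZero m := NeZero.of_pos (d 0).pos
  set L := {w : List (Fin m) | w ∈ Lang d ∧ w.length = n}
  set R := {w : List (Fin m) | w.length = n ∧ Occurs w d}
  have hL : L.Finite := (List.finite_length_eq (Fin m) n).subset fun w hw => hw.2
  have hR : R.Finite := (List.finite_length_eq (Fin m) n).subset fun w hw => hw.1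
  have hExt : ExtCount d n = (Ext d '' L).ncard := by
    unfold ExtCount
    congr 1
    ext S
    exact ⟨fun ⟨w, hw, hwn, hS⟩ => ⟨w, ⟨hw, hwn⟩, hS.symm⟩,
      fun ⟨w, ⟨hw, hwn⟩, hS⟩ => ⟨w, hw, hwn, hS.symm⟩⟩
  have hfibers := ncard_image_eq_finsum_ncard_image_fiber (g := Pred d) (R := R) hL
    (fun x hx => ⟨hd.mem_lang_of_occurs hx.2, hx.1⟩) (fun _ _ _ _ => pred_eq_of_ext_eq)
    (fun v hv => let ⟨x, hxn, hx, hxv⟩ := hd.exists_occurs_pred_eq hv.1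
      ⟨x, ⟨hxn.trans hv.2, hx⟩, hxv⟩)
    (fun x hx x' hx' => hd.eq_of_occurs_of_pred_eq hx.2 hx'.2 (hx.1.trans hx'.1.symm))
  calc ExtCount d n = ∑ᶠ x ∈ R, (1 + (predTwinClasses d n x).ncard) := by
        rw [hExt, hfibers]
        exact finsum_mem_congr rfl fun x hx => hd.ncard_ext_image_pred_fiber hnp hx.2 hx.1
    _ = _ := by rw [finsum_mem_add_distrib hR, finsum_one]; rfl

/-- exact formula for `|E(n)|` for non-sofic β-shifts:
`|E(n)| = Φ_n(d) + ∑_w η(w)`, summing over all words `w` of length `n` occurring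
in `d`, where `η(w)` counts the classes `S_k` (`0 ≤ k ≤ n`, `k` the largest `t ≤ n`
with `(d)_t` a suffix) containing some `v ≠ w` with `P(v) = P(w)`. -/
theorem stmt16 (m : ℕ) (hm : 1 ≤ m) (d : ℕ → Fin m) (hd : Admissible d)
    (hnp : ¬ EventuallyPeriodic d) (n : ℕ) (hn : 1 ≤ n) :
    ExtCount d n = Complexity d n +
      ∑ᶠ w ∈ {w : List (Fin m) | w.length = n ∧ Occurs w d},
        Set.ncard {k : ℕ | k ≤ n ∧ ∃ v ∈ Lang d, v.length = n ∧
          classIndex d n v = k ∧ v ≠ w ∧ Pred d v = Pred d w} :=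
  stmt16_general m d hd hnp n
end

section
/- Let d : ℕ → A be admissible and define the two-sided β-shift (the natural extension) as X̂_d = { x : ℤ → A | every finite subword of x is in L(X_d) }, where a word w of length n is a subword of x : ℤ → A if there exists i ∈ ℤ with x (i+j) = w j for all j < n. Then a word w belongs to L(X_d) if and only if w is a subword of some point of X̂_d; that is, the languages of the one-sided and two-sided β-shifts coincide. -/
open BetaShift

/-- A word `w` occurs in the two-sided sequence `x : ℤ → A`. -/
def OccursZ {A : Type*} (w : List A) (x : ℤ → A) : Prop :=
  ∃ i : ℤ, ∀ j : Fin w.length, x (i + (j : ℕ)) = w.get j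

/-- The natural extension: the two-sided β-shift. -/
def XHat {m : ℕ} (d : ℕ → Fin m) : Set (ℤ → Fin m) :=
  {x | ∀ w : List (Fin m), OccursZ w x → w ∈ Lang d}


lemma shift_iter {A : Type*} : ∀ (i : ℕ) (x : ℕ → A) (n : ℕ), shift^[i] x n = x (n + i) := by
  intro i
  induction i with
  | zero => intro x n; simp [shift]
  | succ i ih =>
    intro x n
    rw [Function.iterate_succ_apply, ih (shift x) n]
    show x (n + i + 1) = x (n + (i + 1))
    congr 1

lemma shift_mem {m : ℕ} {d : ℕ → Fin m} {y : ℕ → Fin m} (hy : y ∈ XSet d) (l : ℕ) :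
    shift^[l] y ∈ XSet d := by
  intro j
  rw [← Function.iterate_add_apply]
  exact hy (j + l)

lemma d0_ne {m : ℕ} (d : ℕ → Fin m) (hd : Admissible d) : (d 0).val ≠ 0 := by
  intro h0
  obtain ⟨i, -, hi⟩ := hd.2 0
  apply hi
  rcases hd.1 i with heq | ⟨j, hj, hlt⟩
  · have := congrFun heq 0
    rw [shift_iter] at this
    simp only [Nat.zero_add] at this
    rw [this]; exact h0
  · rcases Nat.eq_zero_or_pos j with rfl | hjp
    · rw [shift_iter] at hlt
      simp only [Nat.zero_add] at hlt
      rw [Fin.lt_def, h0] at hlt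
      omega
    · have := hj 0 hjp
      rw [shift_iter] at this
      simp only [Nat.zero_add] at this
      rw [this]; exact h0

lemma prepend_zeros {m : ℕ} (d : ℕ → Fin m) (hd : Admissible d) (y : ℕ → Fin m)
    (hy : y ∈ XSet d) (k : ℕ) :
    (fun n => if n < k then (⟨0, (d 0).pos⟩ : Fin m) else y (n - k)) ∈ XSet d := by
  intro i
  by_cases h : k ≤ i
  · have heq : shift^[i] (fun n => if n < k then (⟨0, (d 0).pos⟩ : Fin m) else y (n - k))
        = shift^[i - k] y := by
      funext n
      rw [shift_iter, shift_iter]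
      have : ¬ (n + i < k) := by omega
      simp only [this, if_false]
      congr 1; omega
    rw [heq]
    exact hy (i - k)
  · right
    refine ⟨0, fun j hj => absurd hj (Nat.not_lt_zero j), ?_⟩
    rw [shift_iter]
    have : (0 : ℕ) + i < k := by omega
    simp only [this, if_true]
    rw [Fin.lt_def]
    exact Nat.pos_of_ne_zero (d0_ne d hd)

/-- the languages of the one-sided and two-sided β-shifts coincide. -/
theorem stmt19 (m : ℕ) (hm : 1 ≤ m) (d : ℕ → Fin m) (hd : Admissible d)
    (w : List (Fin m)) :
    w ∈ Lang d ↔ ∃ x ∈ XHat d, OccursZ w x := by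
  constructor
  · rintro ⟨y, hy, i, hi⟩
    refine ⟨fun n => if 0 ≤ n then y (i + n.toNat) else ⟨0, (d 0).pos⟩, ?_, ?_⟩
    · rintro u ⟨p, hp⟩
      by_cases hpos : 0 ≤ p
      · refine ⟨shift^[i + p.toNat] y, shift_mem hy _, 0, fun j => ?_⟩
        have h1 := hp j
        have h2 : (0 : ℤ) ≤ p + (j : ℕ) := by omega
        simp only [if_pos h2] at h1
        rw [Nat.zero_add, shift_iter]
        have h3 : (j : ℕ) + (i + p.toNat) = i + (p + (j : ℕ)).toNat := by omega
        rw [h3]; exact h1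
      · set k : ℕ := (-p).toNat with hk
        refine ⟨fun n => if n < k then (⟨0, (d 0).pos⟩ : Fin m) else shift^[i] y (n - k),
          prepend_zeros d hd _ (shift_mem hy i) k, 0, fun j => ?_⟩
        have h1 := hp j
        simp only [Nat.zero_add]
        by_cases hj : (j : ℕ) < k
        · have h2 : ¬ ((0:ℤ) ≤ p + (j : ℕ)) := by omega
          simp only [if_neg h2] at h1
          simp only [if_pos hj]
          exact h1
        · have h2 : (0:ℤ) ≤ p + (j : ℕ) := by omega
          simp only [if_pos h2] at h1
          simp only [if_neg hj]
          rw [shift_iter]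
          have h3 : (j : ℕ) - k + i = i + (p + (j : ℕ)).toNat := by omega
          rw [h3]; exact h1
    · refine ⟨0, fun j => ?_⟩
      have h2 : (0:ℤ) ≤ 0 + (j : ℕ) := by omega
      simp only [if_pos h2]
      have h3 : i + ((0:ℤ) + (j : ℕ)).toNat = i + (j : ℕ) := by omega
      rw [h3]; exact hi j
  · rintro ⟨x, hx, h⟩
    exact hx w h
end
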